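/- Let A be an algebra over a field k and L ⊆ A a subalgebra. For a left A-module W, let W[L] := {w ∈ W : dim_k (L·w) < ∞}. If for every x ∈ A there exists a finite set {y₁,…,y_r} ⊆ A such that L·x ⊆ Σᵢ yᵢ L (i.e., ux ∈ Σᵢ yᵢL for all u ∈ L), then W[L] is an A-submodule of W. -/
import Mathlib
set_option maxHeartbeats 1000000
set_option synthInstance.maxHeartbeats 200000

private def smulLin {k A W : Type*} [Field k] [Ring A] [Algebra k A]
    [AddCommGroup W] [Module k W] [Module A W] [IsScalarTower k A W] (y : A) : W →ₗ[k] W where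
  toFun v := y • v
  map_add' := smul_add y
  map_smul' c v := smul_comm y c v

private def actLin {k A W : Type*} [Field k] [Ring A] [Algebra k A]
    [AddCommGroup W] [Module k W] [Module A W] [IsScalarTower k A W] (w : W) : A →ₗ[k] W where
  toFun a := a • w
  map_add' a b := add_smul a b w
  map_smul' c a := smul_assoc c a w

/-- Let `L` be a subalgebra of `A` and `W` a left `A`-module, and let
`W[L] = {w : dim_k (span of L·w) < ∞}` be the set of `L`-finite vectors. If for every
`x ∈ A` there are finitely many `y₁, …, y_r ∈ A` with `L·x ⊆ Σᵢ yᵢ L`, then `W[L]` is an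
`A`-submodule of `W`. -/
theorem stmt16 {k A W : Type*} [Field k] [Ring A] [Algebra k A] (L : Subalgebra k A)
    [AddCommGroup W] [Module k W] [Module A W] [IsScalarTower k A W]
    (h : ∀ x : A, ∃ s : Finset A, ∀ u ∈ L,
      u * x ∈ Submodule.span k (⋃ y ∈ s, (fun l => y * l) '' (L : Set A))) :
    ∃ M : Submodule A W, (M : Set W) =
      {w : W | FiniteDimensional k
        (Submodule.span k ((fun u : A => u • w) '' (L : Set A)))} := by
  classical
  refine ⟨{ carrier := {w : W | FiniteDimensional k (Submodule.span k ((fun u : A => u • w) '' (L : Set A)))}, add_mem' := ?_, zero_mem' := ?_, smul_mem' := ?_ }, rfl⟩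
  · intro a b ha hb
    have hle : Submodule.span k ((fun u : A => u • (a + b)) '' (L : Set A)) ≤
        Submodule.span k ((fun u : A => u • a) '' (L : Set A)) ⊔
        Submodule.span k ((fun u : A => u • b) '' (L : Set A)) := by
      rw [Submodule.span_le]
      rintro _ ⟨u, hu, rfl⟩
      show u • (a + b) ∈ _
      rw [smul_add]
      exact add_mem (Submodule.mem_sup_left (Submodule.subset_span ⟨u, hu, rfl⟩))
        (Submodule.mem_sup_right (Submodule.subset_span ⟨u, hu, rfl⟩))
    haveI : FiniteDimensional k (Submodule.span k ((fun u : A => u • a) '' (L : Set A))) := ha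
    haveI : FiniteDimensional k (Submodule.span k ((fun u : A => u • b) '' (L : Set A))) := hb
    exact Submodule.finiteDimensional_of_le hle
  · have : Submodule.span k ((fun u : A => u • (0 : W)) '' (L : Set A)) = ⊥ := by
      rw [Submodule.span_eq_bot]
      rintro _ ⟨u, hu, rfl⟩
      exact smul_zero u
    show FiniteDimensional k _
    rw [this]
    infer_instance
  · intro x w hw
    obtain ⟨s, hs⟩ := h x
    have hw' : FiniteDimensional k
        (Submodule.span k ((fun u : A => u • w) '' (L : Set A))) := hw
    set Sw := Submodule.span k ((fun u : A => u • w) '' (L : Set A)) with hSw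
    set T : Submodule k W := s.sup (fun y => Sw.map (smulLin y)) with hT
    haveI : FiniteDimensional k T := Submodule.finiteDimensional_finset_sup _ _
    have hle : Submodule.span k ((fun u : A => u • (x • w)) '' (L : Set A)) ≤ T := by
      rw [Submodule.span_le]
      rintro _ ⟨u, hu, rfl⟩
      have key : (u * x) • w ∈ Submodule.map (actLin (k := k) w)
          (Submodule.span k (⋃ y ∈ s, (fun l => y * l) '' (L : Set A))) :=
        ⟨u * x, hs u hu, rfl⟩
      rw [Submodule.map_span] at key
      have him : Submodule.span k (actLin (k := k) w '' (⋃ y ∈ s, (fun l => y * l) '' (L : Set A)))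
          ≤ T := by
        rw [Submodule.span_le]
        rintro _ ⟨a, ha, rfl⟩
        simp only [Set.mem_iUnion] at ha
        obtain ⟨y, hy, l, hl, rfl⟩ := ha
        have : actLin (k := k) w (y * l) = smulLin (k := k) y (l • w) := by
          show (y * l) • w = y • (l • w)
          rw [mul_smul]
        rw [this]
        have hmem : smulLin (k := k) y (l • w) ∈ Sw.map (smulLin y) :=
          ⟨l • w, Submodule.subset_span ⟨l, hl, rfl⟩, rfl⟩
        exact Finset.le_sup (f := fun y => Sw.map (smulLin y)) hy hmem
      show u • (x • w) ∈ _
      rw [(mul_smul u x w).symm]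
      exact him key
    exact Submodule.finiteDimensional_of_le hle
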